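/- Let P be a Macaulay poset satisfying that the upper shadow of each full level is the entire next level. If the disjoint union of two copies of P is Macaulay with respect to the union simplicial order, then P is additive. -/

import Mathlib

open Finset

instance {α : Type*} [Fintype α] : Fintype (WithBot α) := inferInstanceAs (Fintype (Option α))
instance {α : Type*} [Fintype α] : Fintype (WithTop α) := inferInstanceAs (Fintype (Option α))

variable {α : Type*}

open Classical in
noncomputable def shadow [PartialOrder α] [Fintype α] (A : Finset α) : Finset α :=
  Finset.univ.filter (fun b => ∃ a ∈ A, a ⋖ b)

def IsRankFn [PartialOrder α] (rank : α → ℕ) : Prop :=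
  (∃ x, rank x = 0 ∧ ∀ y, x ≤ y) ∧ ∀ a b : α, a ⋖ b → rank b = rank a + 1

def IsInitSeg [PartialOrder α] (rank : α → ℕ) (lt : α → α → Prop) (d : ℕ)
    (S : Finset α) : Prop :=
  (∀ x ∈ S, rank x = d) ∧ ∀ a ∈ S, ∀ b, rank b = d → lt a b → b ∈ S

def MacaulayWith [PartialOrder α] [Fintype α] (rank : α → ℕ)
    (lt : α → α → Prop) : Prop :=
  IsTrichotomous α lt ∧ IsTrans α lt ∧ IsIrrefl α lt ∧
  (∀ d (A S : Finset α), (∀ x ∈ A, rank x = d) → IsInitSeg rank lt d S →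
    S.card = A.card → (shadow S).card ≤ (shadow A).card) ∧
  (∀ d (S : Finset α), IsInitSeg rank lt d S → IsInitSeg rank lt (d + 1) (shadow S))

def IsMacaulay [PartialOrder α] [Fintype α] (rank : α → ℕ) : Prop :=
  ∃ lt : α → α → Prop, MacaulayWith rank lt

abbrev Wedge (P Q : Type*) [PartialOrder P] [PartialOrder Q] [OrderBot P] [OrderBot Q] :=
  WithBot ({p : P // p ≠ ⊥} ⊕ {q : Q // q ≠ ⊥})

def wedgeRank {P Q : Type*} [PartialOrder P] [PartialOrder Q] [OrderBot P] [OrderBot Q]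
    (rP : P → ℕ) (rQ : Q → ℕ) : Wedge P Q → ℕ :=
  WithBot.recBotCoe 0 (Sum.elim (fun p => rP p.1) (fun q => rQ q.1))

open Classical in
noncomputable def wedgeInl {P Q : Type*} [PartialOrder P] [PartialOrder Q] [OrderBot P]
    [OrderBot Q] (p : P) : Wedge P Q :=
  if h : p = ⊥ then ⊥ else
    ((Sum.inl ⟨p, h⟩ : {p : P // p ≠ ⊥} ⊕ {q : Q // q ≠ ⊥}) : Wedge P Q)

open Classical in
noncomputable def wedgeInr {P Q : Type*} [PartialOrder P] [PartialOrder Q] [OrderBot P]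
    [OrderBot Q] (q : Q) : Wedge P Q :=
  if h : q = ⊥ then ⊥ else
    ((Sum.inr ⟨q, h⟩ : {p : P // p ≠ ⊥} ⊕ {q : Q // q ≠ ⊥}) : Wedge P Q)

abbrev Diamond (P Q : Type*) [PartialOrder P] [PartialOrder Q] [OrderBot P] [OrderBot Q]
    [OrderTop P] [OrderTop Q] :=
  WithBot (WithTop ({p : P // p ≠ ⊥ ∧ p ≠ ⊤} ⊕ {q : Q // q ≠ ⊥ ∧ q ≠ ⊤}))

def diamondRank {P Q : Type*} [PartialOrder P] [PartialOrder Q] [OrderBot P] [OrderBot Q]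
    [OrderTop P] [OrderTop Q] (rP : P → ℕ) (rQ : Q → ℕ) (s : ℕ) : Diamond P Q → ℕ :=
  WithBot.recBotCoe 0 (WithTop.recTopCoe s (Sum.elim (fun p => rP p.1) (fun q => rQ q.1)))

def diamondInl {P Q : Type*} [PartialOrder P] [PartialOrder Q] [OrderBot P] [OrderBot Q]
    [OrderTop P] [OrderTop Q] (p : {p : P // p ≠ ⊥ ∧ p ≠ ⊤}) : Diamond P Q :=
  (((Sum.inl p : {p : P // p ≠ ⊥ ∧ p ≠ ⊤} ⊕ {q : Q // q ≠ ⊥ ∧ q ≠ ⊤}) :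
    WithTop ({p : P // p ≠ ⊥ ∧ p ≠ ⊤} ⊕ {q : Q // q ≠ ⊥ ∧ q ≠ ⊤})) : Diamond P Q)

abbrev Box (a b : ℕ) := Fin a × Fin b

def boxRank {a b : ℕ} : Box a b → ℕ := fun p => p.1.val + p.2.val

abbrev BoxF {n : ℕ} (d : Fin n → ℕ) := ∀ i, Fin (d i + 1)

def boxFRank {n : ℕ} {d : Fin n → ℕ} : BoxF d → ℕ := fun x => ∑ i, (x i).val

def diamondInr {P Q : Type*} [PartialOrder P] [PartialOrder Q] [OrderBot P] [OrderBot Q]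
    [OrderTop P] [OrderTop Q] (q : {q : Q // q ≠ ⊥ ∧ q ≠ ⊤}) : Diamond P Q :=
  (((Sum.inr q : {p : P // p ≠ ⊥ ∧ p ≠ ⊤} ⊕ {q : Q // q ≠ ⊥ ∧ q ≠ ⊤}) :
    WithTop ({p : P // p ≠ ⊥ ∧ p ≠ ⊤} ⊕ {q : Q // q ≠ ⊥ ∧ q ≠ ⊤})) : Diamond P Q)

abbrev WedgeFam {ι : Type*} (P : ι → Type*) [∀ i, PartialOrder (P i)]
    [∀ i, OrderBot (P i)] :=
  WithBot (Σ i, {p : P i // p ≠ ⊥})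

def wedgeFamRank {ι : Type*} {P : ι → Type*} [∀ i, PartialOrder (P i)]
    [∀ i, OrderBot (P i)] (rank : ∀ i, P i → ℕ) : WedgeFam P → ℕ :=
  WithBot.recBotCoe 0 (fun s => rank s.1 s.2.1)

abbrev DiamondFam {ι : Type*} (P : ι → Type*) [∀ i, PartialOrder (P i)]
    [∀ i, OrderBot (P i)] [∀ i, OrderTop (P i)] :=
  WithBot (WithTop (Σ i, {p : P i // p ≠ ⊥ ∧ p ≠ ⊤}))

def diamondFamRank {ι : Type*} {P : ι → Type*} [∀ i, PartialOrder (P i)]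
    [∀ i, OrderBot (P i)] [∀ i, OrderTop (P i)] (rank : ∀ i, P i → ℕ) (s : ℕ) :
    DiamondFam P → ℕ :=
  WithBot.recBotCoe 0 (WithTop.recTopCoe s (fun x => rank x.1 x.2.1))

open Classical in
/-- A segment of a level: an order-interval for the total order within the level. -/
def IsSeg {α : Type*} [PartialOrder α] (rank : α → ℕ) (lt : α → α → Prop) (d : ℕ)
    (S : Finset α) : Prop :=
  (∀ x ∈ S, rank x = d) ∧
  ∀ a ∈ S, ∀ b ∈ S, ∀ c, rank c = d → lt a c → lt c b → c ∈ S

/-- A final segment of a level: closed downwards within the level. -/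
def IsFinalSeg {α : Type*} [PartialOrder α] (rank : α → ℕ) (lt : α → α → Prop) (d : ℕ)
    (S : Finset α) : Prop :=
  (∀ x ∈ S, rank x = d) ∧ ∀ a ∈ S, ∀ b, rank b = d → lt b a → b ∈ S

-- The new shadow of a segment A of level d: its upper shadow minus the upper shadow of
-- the set of elements of level d larger than all elements of A.
open Classical in
noncomputable def newShadow {α : Type*} [PartialOrder α] [Fintype α] (rank : α → ℕ)
    (lt : α → α → Prop) (d : ℕ) (A : Finset α) : Finset α :=
  shadow A \ shadow (Finset.univ.filter (fun b => rank b = d ∧ ∀ a ∈ A, lt a b))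

/-- Additivity of a Macaulay poset. -/
def IsAdditive {α : Type*} [PartialOrder α] [Fintype α] (rank : α → ℕ)
    (lt : α → α → Prop) : Prop :=
  (∀ d (A B : Finset α), IsInitSeg rank lt d A → IsSeg rank lt d B → A.card = B.card →
    (newShadow rank lt d B).card ≤ (newShadow rank lt d A).card) ∧
  (∀ d (B C : Finset α), IsSeg rank lt d B → IsFinalSeg rank lt d C → B.card = C.card →
    (newShadow rank lt d C).card ≤ (newShadow rank lt d B).card)

/-- The union simplicial order on the disjoint union of two copies of a poset. -/
def usSum {α : Type*} (rank : α → ℕ) (lt : α → α → Prop) : α ⊕ α → α ⊕ α → Prop :=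
  fun x y =>
    Sum.elim rank rank x < Sum.elim rank rank y ∨
    (Sum.elim rank rank x = Sum.elim rank rank y ∧
      (match x, y with
       | Sum.inl a, Sum.inl b => lt a b
       | Sum.inl _, Sum.inr _ => True
       | Sum.inr _, Sum.inl _ => False
       | Sum.inr a, Sum.inr b => lt a b))

/-
Let `F(B)` be the elements of level `d` above a segment `B` (initial segments here consist of
the `lt`-largest elements of a level). Then `B ∪ F(B)` is an initial segment and
`|newShadow B| = |Δ(B ∪ F(B))| - |Δ F(B)|`. In the union simplicial order the second copy lies
above the first, and shadows of the two copies are disjoint, so the Macaulay property of the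
union compares sums of shadows of subsets of `P`:
* `B ∪ F(B)` in the top copy against `A` in the bottom copy and `F(B)` in the top copy gives the
  first inequality (a nonempty initial segment has nothing above it, so `newShadow A = Δ A`);
* `F(B)` in the bottom copy plus the whole level in the top copy, against `B ∪ F(B)` in the bottom
  copy and `F(C)` in the top copy, gives the second, since `C ∪ F(C)` is the whole level.
-/

namespace Sum

variable {β : Type*} [Preorder α] [Preorder β]

theorem inl_covBy_inl_iff {a b : α} : (inl a : α ⊕ β) ⋖ inl b ↔ a ⋖ b := by
  refine ⟨fun h => ⟨inl_lt_inl_iff.1 h.1, fun c hac hcb =>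
    h.2 (inl_lt_inl_iff.2 hac) (inl_lt_inl_iff.2 hcb)⟩, fun h => ⟨inl_lt_inl_iff.2 h.1, ?_⟩⟩
  rintro (c | c) hac hcb
  · exact h.2 (inl_lt_inl_iff.1 hac) (inl_lt_inl_iff.1 hcb)
  · exact not_inr_lt_inl hcb

theorem inr_covBy_inr_iff {a b : β} : (inr a : α ⊕ β) ⋖ inr b ↔ a ⋖ b := by
  refine ⟨fun h => ⟨inr_lt_inr_iff.1 h.1, fun c hac hcb =>
    h.2 (inr_lt_inr_iff.2 hac) (inr_lt_inr_iff.2 hcb)⟩, fun h => ⟨inr_lt_inr_iff.2 h.1, ?_⟩⟩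
  rintro (c | c) hac hcb
  · exact not_inr_lt_inl hac
  · exact h.2 (inr_lt_inr_iff.1 hac) (inr_lt_inr_iff.1 hcb)

theorem not_inl_covBy_inr {a : α} {b : β} : ¬(inl a : α ⊕ β) ⋖ inr b :=
  fun h => not_inl_lt_inr h.lt

theorem not_inr_covBy_inl {a : α} {b : β} : ¬(inr b : α ⊕ β) ⋖ inl a :=
  fun h => not_inr_lt_inl h.lt

end Sum

section Shadow

variable {β : Type*} [PartialOrder α] [Fintype α] [PartialOrder β] [Fintype β]

theorem mem_shadow {A : Finset α} {x : α} : x ∈ shadow A ↔ ∃ a ∈ A, a ⋖ x := by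
  simp [_root_.shadow]

theorem shadow_empty : shadow (∅ : Finset α) = ∅ := by
  ext; simp [_root_.mem_shadow]

theorem shadow_union [DecidableEq α] (A B : Finset α) :
    shadow (A ∪ B) = shadow A ∪ shadow B := by
  ext; simp [_root_.mem_shadow, or_and_right, exists_or]

theorem shadow_disjSum (A : Finset α) (B : Finset β) :
    shadow (A.disjSum B) = (shadow A).disjSum (shadow B) := by
  ext (x | x) <;>
    simp [_root_.mem_shadow, Sum.inl_covBy_inl_iff, Sum.inr_covBy_inr_iff,
      Sum.not_inl_covBy_inr, Sum.not_inr_covBy_inl]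

theorem card_shadow_disjSum (A : Finset α) (B : Finset β) :
    #(shadow (A.disjSum B)) = #(shadow A) + #(shadow B) := by
  rw [shadow_disjSum, card_disjSum]

end Shadow

section Level

variable [Fintype α] {rank : α → ℕ} {lt : α → α → Prop} {d : ℕ} {B : Finset α}

def level (rank : α → ℕ) (d : ℕ) : Finset α := univ.filter (rank · = d)

open Classical in
noncomputable def levelAbove (rank : α → ℕ) (lt : α → α → Prop) (d : ℕ) (B : Finset α) :
    Finset α :=
  univ.filter fun b => rank b = d ∧ ∀ a ∈ B, lt a b

@[simp] theorem mem_level {x : α} : x ∈ level rank d ↔ rank x = d := by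
  simp [level]

@[simp] theorem mem_levelAbove {x : α} :
    x ∈ levelAbove rank lt d B ↔ rank x = d ∧ ∀ a ∈ B, lt a x := by
  simp [levelAbove]

theorem disjoint_levelAbove [Std.Irrefl lt] : Disjoint B (levelAbove rank lt d B) :=
  disjoint_left.2 fun x hxB hx => irrefl x ((mem_levelAbove.1 hx).2 x hxB)

end Level

section Segments

variable [PartialOrder α] {rank : α → ℕ} {lt : α → α → Prop} {d : ℕ}

theorem isInitSeg_empty : IsInitSeg rank lt d ∅ := by
  simp [IsInitSeg]

variable [Fintype α] {A B C : Finset α}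

theorem newShadow_eq_sdiff [DecidableEq α] :
    newShadow rank lt d B = shadow B \ shadow (levelAbove rank lt d B) := by
  ext; simp [newShadow, levelAbove]

theorem card_newShadow_add_card_shadow_levelAbove [DecidableEq α] (rank : α → ℕ)
    (lt : α → α → Prop) (d : ℕ) (B : Finset α) :
    #(newShadow rank lt d B) + #(shadow (levelAbove rank lt d B)) =
      #(shadow (B ∪ levelAbove rank lt d B)) := by
  rw [newShadow_eq_sdiff, shadow_union, card_sdiff_add_card]

theorem isInitSeg_level : IsInitSeg rank lt d (level rank d) :=
  ⟨fun _ hx => mem_level.1 hx, fun _ _ _ hb _ => mem_level.2 hb⟩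

theorem isInitSeg_levelAbove [IsTrans α lt] : IsInitSeg rank lt d (levelAbove rank lt d B) := by
  refine ⟨fun x hx => (mem_levelAbove.1 hx).1, fun a ha b hb hab => ?_⟩
  exact mem_levelAbove.2 ⟨hb, fun c hc => _root_.trans ((mem_levelAbove.1 ha).2 c hc) hab⟩

theorem isInitSeg_union_levelAbove [DecidableEq α] [Std.Trichotomous lt] [IsTrans α lt]
    (hB : IsSeg rank lt d B) : IsInitSeg rank lt d (B ∪ levelAbove rank lt d B) := by
  refine ⟨fun x hx => (mem_union.1 hx).elim (hB.1 x) fun h => (mem_levelAbove.1 h).1,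
    fun a ha b hb hab => ?_⟩
  rcases mem_union.1 ha with haB | haF
  · by_cases hbB : b ∈ B
    · exact mem_union_left _ hbB
    refine mem_union_right _ (mem_levelAbove.2 ⟨hb, fun c hc => ?_⟩)
    rcases trichotomous_of lt c b with h | rfl | h
    · exact h
    · exact absurd hc hbB
    · exact absurd (hB.2 a haB c hc b hb hab h) hbB
  · exact mem_union_right _ (isInitSeg_levelAbove.2 a haF b hb hab)

theorem newShadow_of_isInitSeg [Std.Irrefl lt] (hA : IsInitSeg rank lt d A) (hne : A.Nonempty) :
    newShadow rank lt d A = shadow A := by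
  classical
  obtain ⟨a, ha⟩ := hne
  have : levelAbove rank lt d A = ∅ := eq_empty_of_forall_notMem fun x hx => by
    obtain ⟨hxd, hAx⟩ := mem_levelAbove.1 hx
    exact irrefl x (hAx x (hA.2 a ha x hxd (hAx a ha)))
  rw [newShadow_eq_sdiff, this, _root_.shadow_empty, sdiff_empty]

theorem union_levelAbove_of_isFinalSeg [DecidableEq α] [Std.Trichotomous lt]
    (hC : IsFinalSeg rank lt d C) : C ∪ levelAbove rank lt d C = level rank d := by
  ext x
  simp only [mem_union, mem_levelAbove, mem_level]
  refine ⟨fun h => h.elim (hC.1 x) And.left, fun hx => or_iff_not_imp_left.2 fun hxC =>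
    ⟨hx, fun a ha => ?_⟩⟩
  rcases trichotomous_of lt a x with h | rfl | h
  · exact h
  · exact absurd ha hxC
  · exact absurd (hC.2 a ha x hx h) hxC

end Segments

section UnionSimplicial

variable {rank : α → ℕ} {d : ℕ}

theorem elim_rank_eq_of_mem_disjSum {X Y : Finset α} (hX : ∀ x ∈ X, rank x = d)
    (hY : ∀ y ∈ Y, rank y = d) : ∀ z ∈ X.disjSum Y, Sum.elim rank rank z = d := by
  rintro (x | x) hz
  · exact hX x (inl_mem_disjSum.1 hz)
  · exact hY x (inr_mem_disjSum.1 hz)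

variable [PartialOrder α] [Fintype α] {lt : α → α → Prop} {A B C : Finset α}

theorem isInitSeg_disjSum {T S : Finset α} (hT : IsInitSeg rank lt d T)
    (hS : IsInitSeg rank lt d S) (hTS : T.Nonempty → level rank d ⊆ S) :
    IsInitSeg (Sum.elim rank rank) (usSum rank lt) d (T.disjSum S) := by
  have hrank := elim_rank_eq_of_mem_disjSum hT.1 hS.1
  refine ⟨hrank, fun a ha b hb hab => ?_⟩
  obtain ⟨-, hab⟩ := hab.resolve_left (by rw [hrank a ha, hb]; exact lt_irrefl d)
  rcases a with a | a <;> rcases b with b | b <;>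
    simp only [inl_mem_disjSum, inr_mem_disjSum] at ha hb ⊢
  · exact hT.2 a ha b hb hab
  · exact hTS ⟨a, ha⟩ (mem_level.2 hb)
  · exact (hab : False).elim
  · exact hS.2 a ha b hb hab

theorem MacaulayWith.card_shadow_add_le_of_usSum
    (hU : MacaulayWith (Sum.elim rank rank : α ⊕ α → ℕ) (usSum rank lt)) {T S X Y : Finset α}
    (hT : IsInitSeg rank lt d T) (hS : IsInitSeg rank lt d S)
    (hTS : T.Nonempty → level rank d ⊆ S) (hX : ∀ x ∈ X, rank x = d)
    (hY : ∀ y ∈ Y, rank y = d) (hcard : #T + #S = #X + #Y) :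
    #(shadow T) + #(shadow S) ≤ #(shadow X) + #(shadow Y) := by
  have := hU.2.2.2.1 d _ _ (elim_rank_eq_of_mem_disjSum hX hY) (isInitSeg_disjSum hT hS hTS)
    (by simp only [card_disjSum, hcard])
  rwa [card_shadow_disjSum, card_shadow_disjSum] at this

variable [Std.Trichotomous lt] [IsTrans α lt] [Std.Irrefl lt]

theorem card_newShadow_le_of_isInitSeg
    (hU : MacaulayWith (Sum.elim rank rank : α ⊕ α → ℕ) (usSum rank lt))
    (hA : IsInitSeg rank lt d A) (hB : IsSeg rank lt d B) (hcard : #A = #B) :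
    #(newShadow rank lt d B) ≤ #(newShadow rank lt d A) := by
  classical
  obtain rfl | hne := A.eq_empty_or_nonempty
  · rw [card_empty, eq_comm, card_eq_zero] at hcard
    rw [hcard]
  have hmac := hU.card_shadow_add_le_of_usSum isInitSeg_empty (isInitSeg_union_levelAbove hB)
    (fun h => absurd h not_nonempty_empty) hA.1 (fun _ hx => (mem_levelAbove.1 hx).1)
    (by rw [card_empty, card_union_of_disjoint disjoint_levelAbove, hcard, zero_add])
  have hB' := card_newShadow_add_card_shadow_levelAbove rank lt d B
  rw [_root_.shadow_empty, card_empty, zero_add] at hmac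
  rw [newShadow_of_isInitSeg hA hne]
  omega

theorem card_newShadow_le_of_isFinalSeg
    (hU : MacaulayWith (Sum.elim rank rank : α ⊕ α → ℕ) (usSum rank lt))
    (hB : IsSeg rank lt d B) (hC : IsFinalSeg rank lt d C) (hcard : #B = #C) :
    #(newShadow rank lt d C) ≤ #(newShadow rank lt d B) := by
  classical
  have hlevel := union_levelAbove_of_isFinalSeg hC
  have hmac := hU.card_shadow_add_le_of_usSum (Y := levelAbove rank lt d C)
    (isInitSeg_levelAbove (B := B)) isInitSeg_level (fun _ => subset_rfl)
    (isInitSeg_union_levelAbove hB).1 (fun _ hx => (mem_levelAbove.1 hx).1) (by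
      rw [← hlevel, card_union_of_disjoint disjoint_levelAbove,
        card_union_of_disjoint disjoint_levelAbove]
      omega)
  have hB' := card_newShadow_add_card_shadow_levelAbove rank lt d B
  have hC' := card_newShadow_add_card_shadow_levelAbove rank lt d C
  rw [hlevel] at hC'
  omega

end UnionSimplicial

theorem stmt14_general {α : Type*} [PartialOrder α] [Fintype α]
    (rank : α → ℕ) (lt : α → α → Prop)
    (hM : MacaulayWith rank lt)
    (hU : MacaulayWith (Sum.elim rank rank : α ⊕ α → ℕ) (usSum rank lt)) :
    IsAdditive rank lt := by
  obtain ⟨_, _, _, -, -⟩ := hM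
  exact ⟨fun _ _ _ hA hB hcard => card_newShadow_le_of_isInitSeg hU hA hB hcard,
    fun _ _ _ hB hC hcard => card_newShadow_le_of_isFinalSeg hU hB hC hcard⟩

/-- If P is Macaulay, shadows of full levels are full levels, and the disjoint union of two
copies of P is Macaulay with the union simplicial order, then P is additive. -/
theorem stmt14 {α : Type*} [PartialOrder α] [Fintype α] [DecidableEq α]
    (rank : α → ℕ) (lt : α → α → Prop) (hr : IsRankFn rank)
    (hM : MacaulayWith rank lt)
    (hfull : ∀ r : ℕ, shadow (Finset.univ.filter (fun x => rank x = r)) =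
      Finset.univ.filter (fun x => rank x = r + 1))
    (hU : MacaulayWith (Sum.elim rank rank : α ⊕ α → ℕ) (usSum rank lt)) :
    IsAdditive rank lt :=
  stmt14_general rank lt hM hU
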